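/- Let G be a chordal graph admitting an acyclic orientation with maximum indegree ≤ d, and let T be a rooted clique tree of G. Let C be a non-leaf node of T with children C_1,...,C_ℓ, let O_C be an acyclic orientation of lnk(C) = E(C, V[T_C]) with indegree ≤ d, and let O_{sep(C_i)} be O_C restricted to E(sep(C_i), V[T_{C_i}]). Then there is a bijection between the set AO_d(T_C, O_C) of acyclic orientations of G[V[T_C]] with indegree ≤ d consistent with O_C, and the product AO_d(T_{C_1}, O_{sep(C_1)}) × ... × AO_d(T_{C_ℓ}, O_{sep(C_ℓ)}). -/

import Mathlib

/-!
Restricting an orientation of `G[V[T_C]]` to the subgraphs `G[V[T_{C_i}]]` is inverted by gluing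
the pieces together with `O_C` on `lnk(C)`: the pieces `V[T_{C_i}]` pairwise meet only inside `C`,
and an edge of `G[V[T_C]]` with an endpoint outside `C` lies in one piece. The only difficulty is
acyclicity of a glued orientation. A directed path inside one piece between two vertices of the
clique `C` can be replaced by the single `O_C`-edge joining them (otherwise that edge closes a
cycle in the piece), and a walk passes from one piece to another only through `C`; so a directed
cycle of the glued orientation is either a cycle in one piece or collapses to a cycle of `O_C`.
-/

open Finset

/-- A graph is chordal if every cycle of length at least 4 has a chord. -/
def IsChordal {V : Type*} (G : SimpleGraph V) : Prop :=
  ∀ (v : V) (w : G.Walk v v), w.IsCycle → 4 ≤ w.length →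
    ∃ a b, a ∈ w.support ∧ b ∈ w.support ∧ G.Adj a b ∧ s(a, b) ∉ w.edges

/-- The clique-tree nodes lying in the subtree rooted at `c` (w.r.t. root `r`). -/
def subtreeNodes {ι : Type*} (T : SimpleGraph ι) (r c : ι) : Set ι :=
  {i | ∀ w : T.Walk i r, c ∈ w.support}

/-- `c` is a child of `p` in the tree `T` rooted at `r`. -/
def IsChild {ι : Type*} (T : SimpleGraph ι) (r p c : ι) : Prop :=
  T.Adj p c ∧ ∀ w : T.Walk c r, p ∈ w.support

/-- `V[T_c]`: the union of the cliques indexed by the subtree rooted at `c`. -/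
def subtreeVerts {V ι : Type*} (T : SimpleGraph ι) (r c : ι) (C : ι → Finset V) : Set V :=
  {x | ∃ i ∈ subtreeNodes T r c, x ∈ C i}

/-- `D` is an orientation of the symmetric edge relation `R`:
`D` only orients edges of `R`, and every edge of `R` gets exactly one direction. -/
def Orients {V : Type*} (R D : V → V → Prop) : Prop :=
  (∀ u v, D u v → R u v) ∧ (∀ u v, R u v → (D u v ↔ ¬ D v u))

/-- The directed relation `D` is acyclic (no directed cycle). -/
def AcyclicRel {V : Type*} (D : V → V → Prop) : Prop :=
  ∀ v, ¬ Relation.TransGen D v v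

/-- Every vertex has at most `d` incoming edges under `D`. -/
def IndegLE {V : Type*} (D : V → V → Prop) (d : ℕ) : Prop :=
  ∀ v, Set.ncard {u | D u v} ≤ d

/-- Edge relation of the induced subgraph `G[S]`. -/
def inducedRel {V : Type*} (G : SimpleGraph V) (S : Set V) : V → V → Prop :=
  fun u v => G.Adj u v ∧ u ∈ S ∧ v ∈ S

/-- Edge relation `E(A, B)`: edges of `G` with one endpoint in `A` and the other in `B`. -/
def linkRel {V : Type*} (G : SimpleGraph V) (A B : Set V) : V → V → Prop :=
  fun u v => G.Adj u v ∧ ((u ∈ A ∧ v ∈ B) ∨ (v ∈ A ∧ u ∈ B))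

/-- `AO G d R F O`: acyclic orientations of the edge relation `R` with indegree at
most `d` that are consistent (on `R ∩ F`) with the fixed orientation `O` of `F`. -/
def AO {V : Type*} (d : ℕ) (R F O : V → V → Prop) : Set (V → V → Prop) :=
  {D | Orients R D ∧ AcyclicRel D ∧ IndegLE D d ∧
    ∀ u v, R u v → F u v → (D u v ↔ O u v)}

open Relation

section Relations

variable {V ι : Type*}

theorem linkRel.symm {G : SimpleGraph V} {A B : Set V} {u v : V} (h : linkRel G A B u v) :
    linkRel G A B v u :=
  ⟨h.1.symm, h.2.symm⟩

theorem inducedRel.symm {G : SimpleGraph V} {S : Set V} {u v : V} (h : inducedRel G S u v) :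
    inducedRel G S v u :=
  ⟨h.1.symm, h.2.2, h.2.1⟩

theorem inducedRel_of_linkRel {G : SimpleGraph V} {K W : Set V} (hKW : K ⊆ W) {u v : V}
    (h : linkRel G K W u v) : inducedRel G W u v := by
  rcases h with ⟨hadj, ⟨hu, hv⟩ | ⟨hv, hu⟩⟩
  exacts [⟨hadj, hKW hu, hv⟩, ⟨hadj, hu, hKW hv⟩]

theorem linkRel_inter_iff {G : SimpleGraph V} {K S W : Set V} (hSW : S ⊆ W) {u v : V}
    (h : inducedRel G S u v) : linkRel G (K ∩ S) S u v ↔ linkRel G K W u v := by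
  obtain ⟨hadj, hu, hv⟩ := h
  simp only [linkRel, Set.mem_inter_iff, hadj, hu, hv, hSW hu, hSW hv, true_and, and_true]

theorem mem_of_transGen {r : V → V → Prop} {s : Set V} (hr : ∀ u v, r u v → u ∈ s ∧ v ∈ s)
    {a b : V} (h : TransGen r a b) : a ∈ s ∧ b ∈ s := by
  obtain ⟨_, hac, -⟩ := TransGen.head'_iff.mp h
  obtain ⟨_, -, hcb⟩ := TransGen.tail'_iff.mp h
  exact ⟨(hr _ _ hac).1, (hr _ _ hcb).2⟩

def cliquePieceRel (K : Set V) (O : V → V → Prop) (E : ι → V → V → Prop) : V → V → Prop :=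
  fun u v => (u ∈ K ∧ v ∈ K ∧ O u v) ∨ ∃ i, E i u v

variable {K : Set V} {S : ι → Set V} {O : V → V → Prop} {E : ι → V → V → Prop}

theorem transGen_cliquePieceRel_of_mem (hS : Pairwise fun i j => S i ∩ S j ⊆ K)
    (hES : ∀ i u v, E i u v → u ∈ S i ∧ v ∈ S i)
    (hEO : ∀ i a b, a ∈ K → b ∈ K → TransGen (E i) a b → O a b)
    {a b : V} (ha : a ∈ K) (hab : TransGen (cliquePieceRel K O E) a b) :
    (b ∈ K ∧ TransGen O a b) ∨ ∃ x ∈ K, ReflTransGen O a x ∧ ∃ i, TransGen (E i) x b := by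
  induction hab with
  | single h =>
    rcases h with ⟨-, hb, hO⟩ | ⟨i, hE⟩
    exacts [.inl ⟨hb, .single hO⟩, .inr ⟨a, ha, .refl, i, .single hE⟩]
  | tail _ hstep ih =>
    rename_i b c _
    rcases hstep with ⟨hb, hc, hbc⟩ | ⟨j, hbc⟩
    · rcases ih with ⟨-, hab⟩ | ⟨x, hx, hax, i, hxb⟩
      · exact .inl ⟨hc, hab.tail hbc⟩
      · exact .inl ⟨hc, (TransGen.tail' hax (hEO i x b hx hb hxb)).tail hbc⟩
    · rcases ih with ⟨hb, hab⟩ | ⟨x, hx, hax, i, hxb⟩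
      · exact .inr ⟨b, hb, hab.to_reflTransGen, j, .single hbc⟩
      · by_cases hij : i = j
        · subst hij
          exact .inr ⟨x, hx, hax, i, hxb.tail hbc⟩
        · have hb : b ∈ K := hS hij ⟨(mem_of_transGen (hES i) hxb).2, (hES j b c hbc).1⟩
          exact .inr ⟨b, hb, hax.tail (hEO i x b hx hb hxb), j, .single hbc⟩

theorem exists_mem_of_transGen_cliquePieceRel (hS : Pairwise fun i j => S i ∩ S j ⊆ K)
    (hES : ∀ i u v, E i u v → u ∈ S i ∧ v ∈ S i) {a b : V}
    (hab : TransGen (cliquePieceRel K O E) a b) :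
    (∃ i, TransGen (E i) a b) ∨ ∃ x ∈ K,
      ReflTransGen (cliquePieceRel K O E) a x ∧ ReflTransGen (cliquePieceRel K O E) x b := by
  induction hab with
  | single h =>
    rcases id h with ⟨ha, -, -⟩ | ⟨i, hE⟩
    exacts [.inr ⟨a, ha, .refl, .single h⟩, .inl ⟨i, .single hE⟩]
  | tail _ hstep ih =>
    rename_i b c _
    rcases ih with ⟨i, hab⟩ | ⟨x, hx, hax, hxb⟩
    · have hpiece : E i ≤ cliquePieceRel K O E := fun _ _ h => .inr ⟨i, h⟩
      have hab' : ReflTransGen (cliquePieceRel K O E) a b :=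
        (TransGen.mono hpiece _ _ hab).to_reflTransGen
      rcases id hstep with ⟨hb, -, -⟩ | ⟨j, hbc⟩
      · exact .inr ⟨b, hb, hab', .single hstep⟩
      · by_cases hij : i = j
        · subst hij
          exact .inl ⟨i, hab.tail hbc⟩
        · have hb : b ∈ K := hS hij ⟨(mem_of_transGen (hES i) hab).2, (hES j b c hbc).1⟩
          exact .inr ⟨b, hb, hab', .single hstep⟩
    · exact .inr ⟨x, hx, hax, hxb.tail hstep⟩

theorem acyclicRel_cliquePieceRel (hS : Pairwise fun i j => S i ∩ S j ⊆ K)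
    (hES : ∀ i u v, E i u v → u ∈ S i ∧ v ∈ S i)
    (hEO : ∀ i a b, a ∈ K → b ∈ K → TransGen (E i) a b → O a b)
    (hO : AcyclicRel O) (hE : ∀ i, AcyclicRel (E i)) : AcyclicRel (cliquePieceRel K O E) := by
  intro v hv
  rcases exists_mem_of_transGen_cliquePieceRel hS hES hv with ⟨i, hvv⟩ | ⟨x, hx, hvx, hxv⟩
  · exact hE i v hvv
  have hxx : TransGen (cliquePieceRel K O E) x x := TransGen.trans_right hxv (hv.trans_left hvx)
  rcases transGen_cliquePieceRel_of_mem hS hES hEO hx hxx with ⟨-, hxx⟩ | ⟨y, hy, hxy, i, hyx⟩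
  · exact hO x hxx
  · exact hO x (TransGen.tail' hxy (hEO i y x hy hx hyx))

end Relations

section Gluing

variable {V ι : Type*} {G : SimpleGraph V} {K W : Set V} {S : ι → Set V} {O D : V → V → Prop}
  {E : ι → V → V → Prop} {d : ℕ}

/-- The situation at a node `C` of a rooted clique tree with children `C_i`: here
`K = C`, `W = V[T_C]` and `S i = V[T_{C_i}]`. -/
structure IsCliqueSeparation (G : SimpleGraph V) (K W : Set V) (S : ι → Set V) : Prop where
  isClique : G.IsClique K
  subset : K ⊆ W
  piece_subset (i : ι) : S i ⊆ W
  inter_subset : Pairwise fun i j => S i ∩ S j ⊆ K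
  exists_mem_piece : ∀ x ∈ W, x ∉ K → ∃ i, x ∈ S i
  mem_piece_of_adj : ∀ i u v, G.Adj u v → u ∈ S i → u ∉ K → v ∈ S i

def restrictRel (G : SimpleGraph V) (S : Set V) (D : V → V → Prop) : V → V → Prop :=
  fun u v => D u v ∧ inducedRel G S u v

def glueRel (G : SimpleGraph V) (K W : Set V) (O : V → V → Prop) (E : ι → V → V → Prop) :
    V → V → Prop :=
  fun u v => (linkRel G K W u v ∧ O u v) ∨ ∃ i, E i u v

theorem restrictRel_mem_AO [Finite V] {S : Set V} (hSW : S ⊆ W)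
    (hD : D ∈ AO d (inducedRel G W) (linkRel G K W) O) :
    restrictRel G S D ∈ AO d (inducedRel G S) (linkRel G (K ∩ S) S) O := by
  obtain ⟨⟨-, hDo⟩, hDa, hDd, hDO⟩ := hD
  have hSW' {u v : V} (h : inducedRel G S u v) : inducedRel G W u v :=
    ⟨h.1, hSW h.2.1, hSW h.2.2⟩
  refine ⟨⟨fun u v h => h.2, fun u v h => ?_⟩, fun v h => ?_, fun v => ?_, fun u v h hl => ?_⟩
  · simpa [restrictRel, h, h.symm] using hDo u v (hSW' h)
  · exact hDa v (TransGen.mono (fun _ _ h => h.1) _ _ h)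
  · exact (Set.ncard_le_ncard fun u h => h.1).trans (hDd v)
  · simpa [restrictRel, h] using hDO u v (hSW' h) ((linkRel_inter_iff hSW h).1 hl)

theorem rel_of_transGen_of_mem_clique (hK : G.IsClique K) (hKW : K ⊆ W)
    (hO : Orients (linkRel G K W) O) {S : Set V}
    (hD : D ∈ AO d (inducedRel G S) (linkRel G (K ∩ S) S) O) {a b : V} (ha : a ∈ K)
    (hb : b ∈ K) (hab : TransGen D a b) : O a b := by
  obtain ⟨⟨hDS, -⟩, hDa, -, hDO⟩ := hD
  obtain ⟨haS, hbS⟩ := mem_of_transGen (fun u v h => (hDS u v h).2) hab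
  have hne : a ≠ b := by rintro rfl; exact hDa a hab
  have hba : inducedRel G S b a := ⟨hK hb ha hne.symm, hbS, haS⟩
  by_contra hOab
  have hOba : O b a := not_not.mp fun h => hOab <|
    (hO.2 a b ⟨hK ha hb hne, .inl ⟨ha, hKW hb⟩⟩).2 h
  exact hDa a (hab.tail ((hDO b a hba ⟨hba.1, .inl ⟨⟨hb, hbS⟩, haS⟩⟩).2 hOba))

namespace IsCliqueSeparation

variable (h : IsCliqueSeparation G K W S)
include h

theorem mem_clique_or_exists_piece {u v : V} (huv : inducedRel G W u v) :
    (u ∈ K ∧ v ∈ K) ∨ ∃ i, inducedRel G (S i) u v := by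
  by_cases hu : u ∈ K
  · by_cases hv : v ∈ K
    · exact .inl ⟨hu, hv⟩
    · obtain ⟨i, hvi⟩ := h.exists_mem_piece v huv.2.2 hv
      exact .inr ⟨i, huv.1, h.mem_piece_of_adj i v u huv.1.symm hvi hv, hvi⟩
  · obtain ⟨i, hui⟩ := h.exists_mem_piece u huv.2.1 hu
    exact .inr ⟨i, huv.1, hui, h.mem_piece_of_adj i u v huv.1 hui hu⟩

theorem glueRel_iff_of_linkRel
    (hE : ∀ i, E i ∈ AO d (inducedRel G (S i)) (linkRel G (K ∩ S i) (S i)) O) {u v : V}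
    (huv : linkRel G K W u v) : glueRel G K W O E u v ↔ O u v := by
  refine ⟨?_, fun hO => .inl ⟨huv, hO⟩⟩
  rintro (⟨-, hO⟩ | ⟨i, hEi⟩)
  · exact hO
  · have hi := (hE i).1.1 u v hEi
    exact ((hE i).2.2.2 u v hi ((linkRel_inter_iff (h.piece_subset i) hi).2 huv)).1 hEi

theorem glueRel_iff_of_inducedRel
    (hE : ∀ i, E i ∈ AO d (inducedRel G (S i)) (linkRel G (K ∩ S i) (S i)) O) {i : ι} {u v : V}
    (huv : inducedRel G (S i) u v) : glueRel G K W O E u v ↔ E i u v := by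
  refine ⟨?_, fun hEi => .inr ⟨i, hEi⟩⟩
  have hlink (hl : linkRel G K W u v) : E i u v ↔ O u v :=
    (hE i).2.2.2 u v huv ((linkRel_inter_iff (h.piece_subset i) huv).2 hl)
  rintro (⟨hl, hO⟩ | ⟨j, hEj⟩)
  · exact (hlink hl).2 hO
  by_cases hij : i = j
  · exact hij ▸ hEj
  have hu : u ∈ K := h.inter_subset hij ⟨huv.2.1, ((hE j).1.1 u v hEj).2.1⟩
  have hl : linkRel G K W u v := ⟨huv.1, .inl ⟨hu, h.piece_subset i huv.2.2⟩⟩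
  exact (hlink hl).2 ((h.glueRel_iff_of_linkRel hE hl).1 (.inr ⟨j, hEj⟩))

theorem inducedRel_of_glueRel
    (hE : ∀ i, E i ∈ AO d (inducedRel G (S i)) (linkRel G (K ∩ S i) (S i)) O) {u v : V}
    (huv : glueRel G K W O E u v) : inducedRel G W u v := by
  rcases huv with ⟨hl, -⟩ | ⟨i, hEi⟩
  · exact inducedRel_of_linkRel h.subset hl
  · obtain ⟨hadj, hu, hv⟩ := (hE i).1.1 u v hEi
    exact ⟨hadj, h.piece_subset i hu, h.piece_subset i hv⟩

theorem orients_glueRel (hO : Orients (linkRel G K W) O)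
    (hE : ∀ i, E i ∈ AO d (inducedRel G (S i)) (linkRel G (K ∩ S i) (S i)) O) :
    Orients (inducedRel G W) (glueRel G K W O E) := by
  refine ⟨fun u v => h.inducedRel_of_glueRel hE, fun u v huv => ?_⟩
  rcases h.mem_clique_or_exists_piece huv with ⟨hu, -⟩ | ⟨i, hi⟩
  · have hl : linkRel G K W u v := ⟨huv.1, .inl ⟨hu, huv.2.2⟩⟩
    rw [h.glueRel_iff_of_linkRel hE hl, h.glueRel_iff_of_linkRel hE hl.symm]
    exact hO.2 u v hl
  · rw [h.glueRel_iff_of_inducedRel hE hi, h.glueRel_iff_of_inducedRel hE hi.symm]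
    exact (hE i).1.2 u v hi

theorem acyclicRel_glueRel (hO : Orients (linkRel G K W) O ∧ AcyclicRel O)
    (hE : ∀ i, E i ∈ AO d (inducedRel G (S i)) (linkRel G (K ∩ S i) (S i)) O) :
    AcyclicRel (glueRel G K W O E) := by
  have hstep (u v : V) (huv : glueRel G K W O E u v) : cliquePieceRel K O E u v := by
    rcases h.mem_clique_or_exists_piece (h.inducedRel_of_glueRel hE huv) with ⟨hu, hv⟩ | ⟨i, hi⟩
    · rcases huv with ⟨-, hO⟩ | hEi
      exacts [.inl ⟨hu, hv, hO⟩, .inr hEi]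
    · exact .inr ⟨i, (h.glueRel_iff_of_inducedRel hE hi).1 huv⟩
  have hacyc := acyclicRel_cliquePieceRel h.inter_subset (fun i u v hEi => ((hE i).1.1 u v hEi).2)
    (fun i _ _ ha hb => rel_of_transGen_of_mem_clique h.isClique h.subset hO.1 (hE i) ha hb)
    hO.2 (fun i => (hE i).2.1)
  exact fun v hv => hacyc v (TransGen.mono hstep _ _ hv)

theorem indegLE_glueRel [Finite V] (hO : IndegLE O d)
    (hE : ∀ i, E i ∈ AO d (inducedRel G (S i)) (linkRel G (K ∩ S i) (S i)) O) :
    IndegLE (glueRel G K W O E) d := by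
  intro v
  by_cases hv : v ∈ W ∧ v ∉ K
  · obtain ⟨i, hvi⟩ := h.exists_mem_piece v hv.1 hv.2
    refine (Set.ncard_le_ncard fun u hu => ?_).trans ((hE i).2.2.1 v)
    have hadj := (h.inducedRel_of_glueRel hE hu).1
    exact (h.glueRel_iff_of_inducedRel hE
      ⟨hadj, h.mem_piece_of_adj i v u hadj.symm hvi hv.2, hvi⟩).1 hu
  · refine (Set.ncard_le_ncard fun u hu => ?_).trans (hO v)
    obtain ⟨hadj, huW, hvW⟩ := h.inducedRel_of_glueRel hE hu
    have hvK : v ∈ K := not_not.mp fun hvK => hv ⟨hvW, hvK⟩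
    exact (h.glueRel_iff_of_linkRel hE ⟨hadj, .inr ⟨hvK, huW⟩⟩).1 hu

theorem glueRel_mem_AO [Finite V]
    (hO : Orients (linkRel G K W) O ∧ AcyclicRel O ∧ IndegLE O d)
    (hE : ∀ i, E i ∈ AO d (inducedRel G (S i)) (linkRel G (K ∩ S i) (S i)) O) :
    glueRel G K W O E ∈ AO d (inducedRel G W) (linkRel G K W) O :=
  ⟨h.orients_glueRel hO.1 hE, h.acyclicRel_glueRel ⟨hO.1, hO.2.1⟩ hE, h.indegLE_glueRel hO.2.2 hE,
    fun _ _ _ hl => h.glueRel_iff_of_linkRel hE hl⟩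

theorem glueRel_restrictRel (hD : D ∈ AO d (inducedRel G W) (linkRel G K W) O) :
    glueRel G K W O (fun i => restrictRel G (S i) D) = D := by
  funext u v
  refine propext ⟨?_, fun hDuv => ?_⟩
  · rintro (⟨hl, hO⟩ | ⟨i, hDuv, -⟩)
    exacts [(hD.2.2.2 u v (inducedRel_of_linkRel h.subset hl) hl).2 hO, hDuv]
  have huv := hD.1.1 u v hDuv
  rcases h.mem_clique_or_exists_piece huv with ⟨hu, -⟩ | ⟨i, hi⟩
  · have hl : linkRel G K W u v := ⟨huv.1, .inl ⟨hu, huv.2.2⟩⟩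
    exact .inl ⟨hl, (hD.2.2.2 u v huv hl).1 hDuv⟩
  · exact .inr ⟨i, hDuv, hi⟩

theorem restrictRel_glueRel
    (hE : ∀ i, E i ∈ AO d (inducedRel G (S i)) (linkRel G (K ∩ S i) (S i)) O) (i : ι) :
    restrictRel G (S i) (glueRel G K W O E) = E i := by
  funext u v
  exact propext ⟨fun ⟨hglue, hi⟩ => (h.glueRel_iff_of_inducedRel hE hi).1 hglue,
    fun hEi => ⟨.inr ⟨i, hEi⟩, (hE i).1.1 u v hEi⟩⟩

def aoEquiv [Finite V] (hO : Orients (linkRel G K W) O ∧ AcyclicRel O ∧ IndegLE O d) :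
    AO d (inducedRel G W) (linkRel G K W) O ≃
      ∀ i, AO d (inducedRel G (S i)) (linkRel G (K ∩ S i) (S i)) O where
  toFun D i := ⟨restrictRel G (S i) D, restrictRel_mem_AO (h.piece_subset i) D.2⟩
  invFun E := ⟨glueRel G K W O fun i => E i, h.glueRel_mem_AO hO fun i => (E i).2⟩
  left_inv D := Subtype.ext (h.glueRel_restrictRel D.2)
  right_inv E := funext fun i => Subtype.ext (h.restrictRel_glueRel (fun i => (E i).2) i)

end IsCliqueSeparation

end Gluing

section CliqueTree

open SimpleGraph

variable {V ι : Type*} {T : SimpleGraph ι} {r p q k m : ι}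

theorem SimpleGraph.IsAcyclic.support_subset_of_isPath (hT : T.IsAcyclic) {u v : ι}
    {P : T.Walk u v} (hP : P.IsPath) (w : T.Walk u v) : P.support ⊆ w.support := by
  classical
  have : w.bypass = P := congrArg Subtype.val
    ((hT.subsingleton_path u v).elim ⟨_, w.bypass_isPath⟩ ⟨P, hP⟩)
  exact this ▸ w.support_bypass_subset_support

theorem SimpleGraph.IsAcyclic.mem_support_of_adj_of_adj (hT : T.IsAcyclic) {a b : ι}
    (ha : T.Adj a p) (hb : T.Adj p b) (hab : a ≠ b) (w : T.Walk a b) : p ∈ w.support :=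
  hT.support_subset_of_isPath (P := .cons ha (.cons hb .nil))
    (by simp [Walk.cons_isPath_iff, ha.ne, hb.ne, hab]) w (by simp)

theorem mem_subtreeNodes_self : p ∈ subtreeNodes T r p :=
  fun w => w.start_mem_support

theorem IsChild.subtreeNodes_subset (hc : IsChild T r p q) :
    subtreeNodes T r q ⊆ subtreeNodes T r p := by
  classical
  intro m hm w
  exact w.support_dropUntil_subset_support (hm w) (hc.2 _)

theorem IsChild.not_mem_support_of_isPath (hc : IsChild T r p q) {P : T.Walk p r}
    (hP : P.IsPath) : q ∉ P.support := by
  classical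
  cases P with
  | nil => simpa using hc.1.ne'
  | cons hadj P =>
    rw [Walk.cons_isPath_iff] at hP
    intro hq
    have hqP : q ∈ P.support := by simpa [hc.1.ne'] using hq
    exact hP.2 (P.support_dropUntil_subset_support hqP (hc.2 _))

theorem IsChild.not_mem_subtreeNodes (hT : T.Connected) (hc : IsChild T r p q) :
    p ∉ subtreeNodes T r q := by
  classical
  obtain ⟨P⟩ := hT.preconnected p r
  exact fun h => hc.not_mem_support_of_isPath P.bypass_isPath (h _)

theorem IsChild.eq_of_mem_subtreeNodes (hT : T.IsTree) {q' : ι} (hc : IsChild T r p q)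
    (hc' : IsChild T r p q') (hm : m ∈ subtreeNodes T r q) (hm' : m ∈ subtreeNodes T r q') :
    q = q' := by
  obtain ⟨A, hA, -⟩ := hT.existsUnique_path m p
  obtain ⟨B, hB, -⟩ := hT.existsUnique_path p r
  have hmemA {q : ι} (hc : IsChild T r p q) (hm : m ∈ subtreeNodes T r q) : q ∈ A.support :=
    ((A.mem_support_append_iff B).1 (hm _)).resolve_right (hc.not_mem_support_of_isPath hB)
  rw [hT.isAcyclic.eq_penultimate_of_adj_end hA hc.1 (hmemA hc hm),
    hT.isAcyclic.eq_penultimate_of_adj_end hA hc'.1 (hmemA hc' hm')]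

theorem exists_isChild_mem_subtreeNodes (hT : T.IsTree) (hk : k ∈ subtreeNodes T r p)
    (hkp : k ≠ p) : ∃ q, IsChild T r p q ∧ k ∈ subtreeNodes T r q := by
  classical
  obtain ⟨A, hA, -⟩ := hT.existsUnique_path k p
  have hqA : A.penultimate ∈ A.support := A.getVert_mem_support _
  have hadj : T.Adj A.penultimate p := A.adj_penultimate (Walk.not_nil_of_ne hkp)
  refine ⟨A.penultimate, ⟨hadj.symm, fun w => ?_⟩, fun w => ?_⟩
  · -- otherwise `A` up to its penultimate vertex, followed by `w`, would avoid `p`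
    by_contra hpw
    have hp := ((A.takeUntil _ hqA).mem_support_append_iff w).1 (hk _)
    exact Walk.endpoint_notMem_support_takeUntil hA hqA hadj.ne' (hp.resolve_right hpw)
  · exact w.support_takeUntil_subset_support (hk w)
      (hT.isAcyclic.support_subset_of_isPath hA _ hqA)

variable {C : ι → Finset V}

theorem subset_subtreeVerts : (C p : Set V) ⊆ subtreeVerts T r p C :=
  fun _ hx => ⟨p, mem_subtreeNodes_self, hx⟩

theorem IsChild.subtreeVerts_subset (hc : IsChild T r p q) :
    subtreeVerts T r q C ⊆ subtreeVerts T r p C :=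
  fun _ ⟨k, hk, hx⟩ => ⟨k, hc.subtreeNodes_subset hk, hx⟩

variable (hsubtree : ∀ (x : V) (i j : ι), x ∈ C i → x ∈ C j →
  ∃ w : T.Walk i j, ∀ m ∈ w.support, x ∈ C m)
include hsubtree

theorem mem_of_mem_subtreeNodes_of_not_mem {a : ι} {x : V} (hk : k ∈ subtreeNodes T r a)
    (hm : m ∉ subtreeNodes T r a) (hxk : x ∈ C k) (hxm : x ∈ C m) : x ∈ C a := by
  obtain ⟨w', hw'⟩ : ∃ w' : T.Walk m r, a ∉ w'.support := by
    simpa [subtreeNodes] using hm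
  obtain ⟨w, hw⟩ := hsubtree x k m hxk hxm
  exact hw a (((w.mem_support_append_iff w').1 (hk _)).resolve_right hw')

theorem IsChild.coe_inter_eq [DecidableEq V] (hT : T.Connected) (hc : IsChild T r p q) :
    ((C q ∩ C p : Finset V) : Set V) = (C p : Set V) ∩ subtreeVerts T r q C := by
  ext x
  simp only [Finset.coe_inter, Set.mem_inter_iff, Finset.mem_coe]
  refine ⟨fun ⟨hq, hp⟩ => ⟨hp, subset_subtreeVerts hq⟩, fun ⟨hp, k, hk, hxk⟩ => ⟨?_, hp⟩⟩
  exact mem_of_mem_subtreeNodes_of_not_mem hsubtree hk (hc.not_mem_subtreeNodes hT) hxk hp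

theorem IsChild.subtreeVerts_inter_subset (hT : T.IsTree) {q' : ι} (hc : IsChild T r p q)
    (hc' : IsChild T r p q') (hne : q ≠ q') :
    subtreeVerts T r q C ∩ subtreeVerts T r q' C ⊆ C p := by
  rintro x ⟨⟨k, hk, hxk⟩, ⟨k', hk', hxk'⟩⟩
  have hxq : x ∈ C q := mem_of_mem_subtreeNodes_of_not_mem hsubtree hk
    (fun h => hne (hc.eq_of_mem_subtreeNodes hT hc' h hk')) hxk hxk'
  have hxq' : x ∈ C q' := mem_of_mem_subtreeNodes_of_not_mem hsubtree hk'
    (fun h => hne (hc.eq_of_mem_subtreeNodes hT hc' hk h)) hxk' hxk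
  obtain ⟨w, hw⟩ := hsubtree x q q' hxq hxq'
  exact hw p (hT.isAcyclic.mem_support_of_adj_of_adj hc.1.symm hc'.1 hne w)

theorem exists_isChild_of_adj (hT : T.IsTree) {G : SimpleGraph V}
    (hedge : ∀ u v, G.Adj u v → ∃ i, u ∈ C i ∧ v ∈ C i) {u v : V} (hadj : G.Adj u v)
    (hu : u ∈ subtreeVerts T r p C) (hup : u ∉ C p) :
    ∃ q, IsChild T r p q ∧ u ∈ subtreeVerts T r q C ∧ v ∈ subtreeVerts T r q C := by
  obtain ⟨k', hk', huk'⟩ := hu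
  obtain ⟨k, huk, hvk⟩ := hedge u v hadj
  have hk : k ∈ subtreeNodes T r p :=
    not_not.mp fun hk => hup (mem_of_mem_subtreeNodes_of_not_mem hsubtree hk' hk huk' huk)
  obtain ⟨q, hq, hkq⟩ := exists_isChild_mem_subtreeNodes hT hk (by rintro rfl; exact hup huk)
  exact ⟨q, hq, ⟨k, hkq, huk⟩, ⟨k, hkq, hvk⟩⟩

theorem isCliqueSeparation_subtreeVerts (hT : T.IsTree) {G : SimpleGraph V}
    (hclique : G.IsClique (C p : Set V)) (hedge : ∀ u v, G.Adj u v → ∃ i, u ∈ C i ∧ v ∈ C i)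
    {κ : Type*} {c : κ → ι} (hchild : ∀ i, IsChild T r p (c i)) (hcinj : Function.Injective c)
    (hallchild : ∀ j, IsChild T r p j → ∃ i, c i = j) :
    IsCliqueSeparation G (C p) (subtreeVerts T r p C) fun i => subtreeVerts T r (c i) C := by
  have hinter : Pairwise fun i j => subtreeVerts T r (c i) C ∩ subtreeVerts T r (c j) C ⊆ C p :=
    fun i j hij => (hchild i).subtreeVerts_inter_subset hsubtree hT (hchild j) (hcinj.ne hij)
  refine ⟨hclique, subset_subtreeVerts, fun i => (hchild i).subtreeVerts_subset, hinter,
    fun x ⟨k, hk, hxk⟩ hxp => ?_, fun i u v hadj hu hup => ?_⟩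
  · obtain ⟨q, hq, hkq⟩ := exists_isChild_mem_subtreeNodes hT hk (by rintro rfl; exact hxp hxk)
    obtain ⟨i, rfl⟩ := hallchild q hq
    exact ⟨i, k, hkq, hxk⟩
  · obtain ⟨q, hq, huq, hvq⟩ := exists_isChild_of_adj hsubtree hT hedge hadj
      ((hchild i).subtreeVerts_subset hu) hup
    obtain ⟨j, rfl⟩ := hallchild q hq
    obtain rfl : i = j := not_not.mp fun hij => hup (hinter hij ⟨hu, huq⟩)
    exact hvq

end CliqueTree

theorem chordal_orientations_bijection_general {V ι : Type*} [Fintype V] [DecidableEq V]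
    (G : SimpleGraph V) (d : ℕ)
    (T : SimpleGraph ι) (hT : T.IsTree) (r : ι)
    (C : ι → Finset V)
    (hclique : ∀ i, G.IsClique (C i : Set V))
    (hedge : ∀ u v, G.Adj u v → ∃ i, u ∈ C i ∧ v ∈ C i)
    (hsubtree : ∀ (x : V) (i j : ι), x ∈ C i → x ∈ C j →
      ∃ w : T.Walk i j, ∀ m ∈ w.support, x ∈ C m)
    (p : ι) (ℓ : ℕ) (c : Fin ℓ → ι)
    (hchild : ∀ i, IsChild T r p (c i)) (hcinj : Function.Injective c)
    (hallchild : ∀ j, IsChild T r p j → ∃ i, c i = j)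
    (OC : V → V → Prop)
    (hOC : Orients (linkRel G (C p : Set V) (subtreeVerts T r p C)) OC ∧
      AcyclicRel OC ∧ IndegLE OC d) :
    Nonempty
      ((AO d (inducedRel G (subtreeVerts T r p C))
          (linkRel G (C p : Set V) (subtreeVerts T r p C)) OC) ≃
        ∀ i : Fin ℓ,
          (AO d (inducedRel G (subtreeVerts T r (c i) C))
            (linkRel G ((C (c i) ∩ C p : Finset V) : Set V) (subtreeVerts T r (c i) C))
            OC)) := by
  have hsep := isCliqueSeparation_subtreeVerts hsubtree hT (hclique p) hedge hchild hcinj hallchild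
  have hinter (i : Fin ℓ) : ((C (c i) ∩ C p : Finset V) : Set V) =
      (C p : Set V) ∩ subtreeVerts T r (c i) C :=
    (hchild i).coe_inter_eq hsubtree hT.connected
  exact ⟨(hsep.aoEquiv hOC).trans (.piCongrRight fun i => .setCongr (by rw [hinter]))⟩

/-- for a chordal graph `G` (admitting an acyclic orientation with
indegree `≤ d`) with rooted clique tree `T`, a non-leaf node `p` with children
`c 0, …, c (ℓ-1)`, and an acyclic indegree-`≤ d` orientation `OC` of
`lnk(C p) = E(C p, V[T_p])`, the set of acyclic indegree-`≤ d` orientations of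
`G[V[T_p]]` consistent with `OC` is in bijection with the product over the
children of the sets of acyclic indegree-`≤ d` orientations of `G[V[T_{cᵢ}]]`
consistent with `OC` restricted to `E(sep(cᵢ), V[T_{cᵢ}])`, where
`sep(cᵢ) = C cᵢ ∩ C p`. -/
theorem chordal_orientations_bijection {V ι : Type*} [Fintype V] [DecidableEq V]
    (G : SimpleGraph V) (hchordal : IsChordal G) (d : ℕ)
    (hGorient : ∃ D, Orients G.Adj D ∧ AcyclicRel D ∧ IndegLE D d)
    (T : SimpleGraph ι) (hT : T.IsTree) (r : ι)
    (C : ι → Finset V)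
    (hclique : ∀ i, G.IsClique (C i : Set V))
    (hmax : ∀ i, ∀ S : Finset V, G.IsClique (S : Set V) → C i ⊆ S → S = C i)
    (hedge : ∀ u v, G.Adj u v → ∃ i, u ∈ C i ∧ v ∈ C i)
    (hsubtree : ∀ (x : V) (i j : ι), x ∈ C i → x ∈ C j →
      ∃ w : T.Walk i j, ∀ m ∈ w.support, x ∈ C m)
    (p : ι) (ℓ : ℕ) (hℓ : 0 < ℓ) (c : Fin ℓ → ι)
    (hchild : ∀ i, IsChild T r p (c i)) (hcinj : Function.Injective c)
    (hallchild : ∀ j, IsChild T r p j → ∃ i, c i = j)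
    (OC : V → V → Prop)
    (hOC : Orients (linkRel G (C p : Set V) (subtreeVerts T r p C)) OC ∧
      AcyclicRel OC ∧ IndegLE OC d) :
    Nonempty
      ((AO d (inducedRel G (subtreeVerts T r p C))
          (linkRel G (C p : Set V) (subtreeVerts T r p C)) OC) ≃
        ∀ i : Fin ℓ,
          (AO d (inducedRel G (subtreeVerts T r (c i) C))
            (linkRel G ((C (c i) ∩ C p : Finset V) : Set V) (subtreeVerts T r (c i) C))
            OC)) :=
  chordal_orientations_bijection_general G d T hT r C hclique hedge hsubtree p ℓ c hchild hcinj
    hallchild OC hOC
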